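/- Let Γ be a finite graph, Δ ⊆ Γ a full subgraph, v ∈ Γ a vertex, K ⊆ Γ ∖ st(v) a union of connected components of Γ ∖ st(v), and g = c_K^v the partial conjugation by v based at K. Then g preserves the special subgroup A_Δ (up to conjugacy in A_Γ) if and only if K ∩ Δ = ∅, or Δ ∖ st(v) ⊆ K, or v ∈ Δ; and g acts trivially on A_Δ (i.e. some representative of its outer class restricts to the identity on A_Δ) if and only if K ∩ Δ = ∅ or Δ ∖ st(v) ⊆ K. -/

import Mathlib

/-!
STATEMENT 8: A partial conjugation `g = c_K^v` of a RAAG `A_Γ` preserves the special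
subgroup `A_Δ` up to conjugacy iff `K ∩ Δ = ∅`, or `Δ ∖ st(v) ⊆ K`, or `v ∈ Δ`;
and it acts trivially on `A_Δ` iff `K ∩ Δ = ∅` or `Δ ∖ st(v) ⊆ K`.
-/

/-- The defining relators of the right-angled Artin group of a graph. -/
def raagRels {V : Type*} (Γ : SimpleGraph V) : Set (FreeGroup V) :=
  {r | ∃ u v : V, Γ.Adj u v ∧
    r = FreeGroup.of u * FreeGroup.of v * (FreeGroup.of u)⁻¹ * (FreeGroup.of v)⁻¹}

/-- The right-angled Artin group on a graph `Γ`. -/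
abbrev RAAG {V : Type*} (Γ : SimpleGraph V) : Type _ := PresentedGroup (raagRels Γ)

/-- The standard generator of `RAAG Γ` corresponding to a vertex. -/
def raagGen {V : Type*} (Γ : SimpleGraph V) (v : V) : RAAG Γ := PresentedGroup.of v

/-- The star of a vertex: the vertex together with its neighbours. -/
def graphStar {V : Type*} (Γ : SimpleGraph V) (v : V) : Set V :=
  insert v (Γ.neighborSet v)

/-- The connected component (as a set of vertices of `V`) of the vertex `u` in the induced
subgraph of `Γ` on the set `s`. -/
def compIn {V : Type*} (Γ : SimpleGraph V) (s : Set V) (u : V) : Set V :=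
  {x | ∃ (hu : u ∈ s) (hx : x ∈ s), (Γ.induce s).Reachable ⟨u, hu⟩ ⟨x, hx⟩}

/-- `A` is a union of connected components of `Γ ∖ st(v)`. -/
def IsUnionOfComponents {V : Type*} (Γ : SimpleGraph V) (v : V) (A : Set V) : Prop :=
  A ⊆ (graphStar Γ v)ᶜ ∧ ∀ u ∈ A, compIn Γ (graphStar Γ v)ᶜ u ⊆ A

open Classical in
/-- `φ` is the partial conjugation by the vertex `v` based at the set `A`: it sends each
standard generator `u ∈ A` to `v⁻¹ u v` and fixes all other standard generators. -/
noncomputable def IsPartialConj {V : Type*} (Γ : SimpleGraph V)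
    (φ : MulAut (RAAG Γ)) (v : V) (A : Set V) : Prop :=
  ∀ u : V, φ (raagGen Γ u) =
    if u ∈ A then (raagGen Γ v)⁻¹ * raagGen Γ u * raagGen Γ v else raagGen Γ u

/-- The special subgroup of the RAAG generated by the vertices of `Δ`. -/
def specialSubgroup {V : Type*} (Γ : SimpleGraph V) (Δ : Set V) : Subgroup (RAAG Γ) :=
  Subgroup.closure (raagGen Γ '' Δ)

/-- `φ` preserves the subgroup `S` up to conjugacy: some representative of the outer
class of `φ` maps `S` onto `S`. -/
def PreservesSubgroup {V : Type*} (Γ : SimpleGraph V) (φ : MulAut (RAAG Γ))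
    (S : Subgroup (RAAG Γ)) : Prop :=
  ∃ x : RAAG Γ, S.map ((MulAut.conj x * φ : MulAut (RAAG Γ)) : RAAG Γ →* RAAG Γ) = S

/-- `φ` acts trivially on the subgroup `S`: some representative of the outer class of `φ`
restricts to the identity on `S`. -/
def ActsTriviallyOn {V : Type*} (Γ : SimpleGraph V) (φ : MulAut (RAAG Γ))
    (S : Subgroup (RAAG Γ)) : Prop :=
  ∃ x : RAAG Γ, ∀ a ∈ S, x * φ a * x⁻¹ = a

/-
The "if" directions have explicit representatives: the identity is trivial on `A_Δ` when
`K ∩ Δ = ∅`, conjugation by `v` undoes `g` on `A_Δ` when `Δ ∖ st(v) ⊆ K`, and when `v ∈ Δ`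
the automorphism `g` itself maps `A_Δ` onto `A_Δ`.

For the converses, map `A_Γ` to `S₃` by `v ↦ (0 2)`, `st(v) ∖ {v} ↦ 1` and every other vertex
`↦ (0 1)`. Take `u ∈ K ∩ Δ` and `b ∈ Δ ∖ (st(v) ∪ K)`. Any representative `x g x⁻¹` sends `b`
and `u` to elements whose images are `y (0 1) y⁻¹` and `y (1 2) y⁻¹` for a single `y`, and
these never both fix `2`. But a representative trivial on `A_Δ` fixes `b` and `u`, whose images
fix `2`; and one preserving `A_Δ` with `v ∉ Δ` sends them into `A_Δ`, whose image fixes `2`.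
-/

open Equiv

section

variable {V : Type*} {Γ : SimpleGraph V}

theorem raagGen_commute_of_adj {p q : V} (h : Γ.Adj p q) :
    Commute (raagGen Γ p) (raagGen Γ q) := by
  rw [← commutatorElement_eq_one_iff_commute, commutatorElement_def]
  exact (QuotientGroup.eq_one_iff _).mpr (Subgroup.subset_normalClosure ⟨p, q, h, rfl⟩)

theorem ne_of_notMem_graphStar {v w : V} (hw : w ∉ graphStar Γ v) : w ≠ v := by
  rintro rfl
  exact hw (Set.mem_insert w _)

theorem raagGen_commute_of_mem_graphStar {v w : V} (hw : w ∈ graphStar Γ v) :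
    Commute (raagGen Γ v) (raagGen Γ w) := by
  rcases hw with rfl | hadj
  · exact Commute.refl _
  · exact raagGen_commute_of_adj hadj

def raagLift {G : Type*} [Group G] (f : V → G)
    (hf : ∀ p q, Γ.Adj p q → Commute (f p) (f q)) : RAAG Γ →* G :=
  PresentedGroup.toGroup (f := f) (by
    rintro _ ⟨p, q, hpq, rfl⟩
    simpa [commutatorElement_def] using commutatorElement_eq_one_iff_commute.mpr (hf p q hpq))

@[simp]
theorem raagLift_raagGen {G : Type*} [Group G] (f : V → G)
    (hf : ∀ p q, Γ.Adj p q → Commute (f p) (f q)) (w : V) :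
    raagLift f hf (raagGen Γ w) = f w :=
  PresentedGroup.toGroup.of _

theorem raagGen_mem_specialSubgroup {Δ : Set V} {w : V} (hw : w ∈ Δ) :
    raagGen Γ w ∈ specialSubgroup Γ Δ :=
  Subgroup.subset_closure ⟨w, hw, rfl⟩

theorem specialSubgroup_le_iff {Δ : Set V} {H : Subgroup (RAAG Γ)} :
    specialSubgroup Γ Δ ≤ H ↔ ∀ w ∈ Δ, raagGen Γ w ∈ H := by
  rw [specialSubgroup, Subgroup.closure_le, Set.image_subset_iff]
  rfl

theorem actsTriviallyOn_specialSubgroup_of_forall {φ : MulAut (RAAG Γ)} {Δ : Set V}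
    (x : RAAG Γ) (h : ∀ w ∈ Δ, x * φ (raagGen Γ w) * x⁻¹ = raagGen Γ w) :
    ActsTriviallyOn Γ φ (specialSubgroup Γ Δ) :=
  ⟨x, fun _ ha => MonoidHom.eqOn_closure
    (f := ((MulAut.conj x * φ : MulAut (RAAG Γ)) : RAAG Γ →* RAAG Γ)) (g := MonoidHom.id _)
    (by rintro _ ⟨w, hw, rfl⟩; exact h w hw) ha⟩

theorem ActsTriviallyOn.preservesSubgroup {φ : MulAut (RAAG Γ)} {S : Subgroup (RAAG Γ)}
    (h : ActsTriviallyOn Γ φ S) : PreservesSubgroup Γ φ S := by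
  obtain ⟨x, hx⟩ := h
  refine ⟨x, le_antisymm ?_ fun a ha => ⟨a, ha, hx a ha⟩⟩
  rintro _ ⟨a, ha, rfl⟩
  show x * φ a * x⁻¹ ∈ S
  rwa [hx a ha]

theorem IsPartialConj.apply_raagGen_of_mem {g : MulAut (RAAG Γ)} {v u : V} {K : Set V}
    (hg : IsPartialConj Γ g v K) (hu : u ∈ K) :
    g (raagGen Γ u) = (raagGen Γ v)⁻¹ * raagGen Γ u * raagGen Γ v := by
  rw [hg u, if_pos hu]

theorem IsPartialConj.apply_raagGen_of_notMem {g : MulAut (RAAG Γ)} {v u : V} {K : Set V}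
    (hg : IsPartialConj Γ g v K) (hu : u ∉ K) : g (raagGen Γ u) = raagGen Γ u := by
  rw [hg u, if_neg hu]

end

section Detector

variable {V : Type*} (Γ : SimpleGraph V) (v : V)

open Classical in
noncomputable def starDetector : RAAG Γ →* Perm (Fin 3) :=
  raagLift (fun w => if w = v then swap 0 2 else if w ∈ graphStar Γ v then 1 else swap 0 1)
    (by
      intro p q hpq
      by_cases hpv : p = v
      · subst hpv
        simp [graphStar, hpq, hpq.ne']
      by_cases hqv : q = v
      · subst hqv
        simp [graphStar, hpq.symm, hpq.ne]
      simp only [if_neg hpv, if_neg hqv]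
      split_ifs <;> simp)

variable {Γ v}

theorem starDetector_raagGen_self : starDetector Γ v (raagGen Γ v) = swap 0 2 := by
  simp [starDetector]

theorem starDetector_raagGen_of_notMem_graphStar {w : V} (hw : w ∉ graphStar Γ v) :
    starDetector Γ v (raagGen Γ w) = swap 0 1 := by
  simp [starDetector, hw, ne_of_notMem_graphStar hw]

theorem starDetector_raagGen_apply_two {w : V} (hw : w ≠ v) :
    starDetector Γ v (raagGen Γ w) 2 = 2 := by
  simp only [starDetector, raagLift_raagGen, if_neg hw]
  split_ifs <;> decide

theorem specialSubgroup_le_comap_starDetector {Δ : Set V} (hvΔ : v ∉ Δ) :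
    specialSubgroup Γ Δ ≤ (MulAction.stabilizer (Perm (Fin 3)) (2 : Fin 3)).comap
      (starDetector Γ v) :=
  specialSubgroup_le_iff.mpr fun _ hw =>
    starDetector_raagGen_apply_two (ne_of_mem_of_not_mem hw hvΔ)

end Detector

theorem conj_swap_zero_one_apply_two_ne : ∀ y : Perm (Fin 3),
    (y * swap 0 1 * y⁻¹ : Perm (Fin 3)) 2 = 2 →
      (y * ((swap 0 2)⁻¹ * swap 0 1 * swap 0 2) * y⁻¹ : Perm (Fin 3)) 2 ≠ 2 := by
  decide

section PartialConj

variable {V : Type*} {Γ : SimpleGraph V} {g : MulAut (RAAG Γ)} {v : V} {K Δ : Set V}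

theorem IsPartialConj.actsTriviallyOn_of_inter_eq_empty (hg : IsPartialConj Γ g v K)
    (h : K ∩ Δ = ∅) : ActsTriviallyOn Γ g (specialSubgroup Γ Δ) := by
  refine actsTriviallyOn_specialSubgroup_of_forall 1 fun w hw => ?_
  rw [hg.apply_raagGen_of_notMem fun hwK => h.subset ⟨hwK, hw⟩]
  group

theorem IsPartialConj.actsTriviallyOn_of_diff_subset (hg : IsPartialConj Γ g v K)
    (h : Δ \ graphStar Γ v ⊆ K) : ActsTriviallyOn Γ g (specialSubgroup Γ Δ) := by
  refine actsTriviallyOn_specialSubgroup_of_forall (raagGen Γ v) fun w hw => ?_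
  by_cases hwK : w ∈ K
  · rw [hg.apply_raagGen_of_mem hwK]
    group
  · have hw_star : w ∈ graphStar Γ v := by_contra fun hw' => hwK (h ⟨hw, hw'⟩)
    rw [hg.apply_raagGen_of_notMem hwK, (raagGen_commute_of_mem_graphStar hw_star).eq,
      mul_inv_cancel_right]

theorem IsPartialConj.preservesSubgroup_of_mem (hg : IsPartialConj Γ g v K) (hvK : v ∉ K)
    (hvΔ : v ∈ Δ) : PreservesSubgroup Γ g (specialSubgroup Γ Δ) := by
  have hv := raagGen_mem_specialSubgroup (Γ := Γ) hvΔ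
  refine ⟨1, ?_⟩
  rw [map_one, one_mul]
  refine le_antisymm
    (Subgroup.map_le_iff_le_comap.mpr <| specialSubgroup_le_iff.mpr fun w hw => ?_)
    (specialSubgroup_le_iff.mpr fun w hw => ?_)
  all_goals have hw' := raagGen_mem_specialSubgroup (Γ := Γ) hw
  · show g (raagGen Γ w) ∈ specialSubgroup Γ Δ
    by_cases hwK : w ∈ K
    · rw [hg.apply_raagGen_of_mem hwK]
      exact mul_mem (mul_mem (inv_mem hv) hw') hv
    · rwa [hg.apply_raagGen_of_notMem hwK]
  · by_cases hwK : w ∈ K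
    · refine ⟨raagGen Γ v * raagGen Γ w * (raagGen Γ v)⁻¹,
        mul_mem (mul_mem hv hw') (inv_mem hv), ?_⟩
      show g (_ * _ * _) = _
      rw [map_mul, map_mul, map_inv, hg.apply_raagGen_of_notMem hvK, hg.apply_raagGen_of_mem hwK]
      group
    · exact ⟨raagGen Γ w, hw', hg.apply_raagGen_of_notMem hwK⟩

theorem IsPartialConj.starDetector_conj_apply_two_ne (hg : IsPartialConj Γ g v K) {u b : V}
    (hu : u ∈ K) (hu_star : u ∉ graphStar Γ v) (hb_star : b ∉ graphStar Γ v) (hb : b ∉ K)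
    (x : RAAG Γ) (hfix : starDetector Γ v (x * g (raagGen Γ b) * x⁻¹) 2 = 2) :
    starDetector Γ v (x * g (raagGen Γ u) * x⁻¹) 2 ≠ 2 := by
  rw [hg.apply_raagGen_of_notMem hb] at hfix
  rw [hg.apply_raagGen_of_mem hu]
  simp only [map_mul, map_inv, starDetector_raagGen_self,
    starDetector_raagGen_of_notMem_graphStar hb_star,
    starDetector_raagGen_of_notMem_graphStar hu_star] at hfix ⊢
  exact conj_swap_zero_one_apply_two_ne _ hfix

theorem IsPartialConj.actsTriviallyOn_specialSubgroup_iff (hK : K ⊆ (graphStar Γ v)ᶜ)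
    (hg : IsPartialConj Γ g v K) :
    ActsTriviallyOn Γ g (specialSubgroup Γ Δ) ↔ K ∩ Δ = ∅ ∨ Δ \ graphStar Γ v ⊆ K := by
  refine ⟨fun ⟨x, hx⟩ => ?_, fun h => h.elim hg.actsTriviallyOn_of_inter_eq_empty
    hg.actsTriviallyOn_of_diff_subset⟩
  by_contra! hcon
  obtain ⟨⟨u, hu, huΔ⟩, hnot⟩ := hcon
  obtain ⟨b, ⟨hbΔ, hb_star⟩, hb⟩ := Set.not_subset.mp hnot
  refine hg.starDetector_conj_apply_two_ne hu (hK hu) hb_star hb x ?_ ?_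
  · rw [hx _ (raagGen_mem_specialSubgroup hbΔ)]
    exact starDetector_raagGen_apply_two (ne_of_notMem_graphStar hb_star)
  · rw [hx _ (raagGen_mem_specialSubgroup huΔ)]
    exact starDetector_raagGen_apply_two (ne_of_notMem_graphStar (hK hu))

theorem IsPartialConj.preservesSubgroup_specialSubgroup_iff (hK : K ⊆ (graphStar Γ v)ᶜ)
    (hg : IsPartialConj Γ g v K) :
    PreservesSubgroup Γ g (specialSubgroup Γ Δ) ↔
      K ∩ Δ = ∅ ∨ Δ \ graphStar Γ v ⊆ K ∨ v ∈ Δ := by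
  refine ⟨fun ⟨x, hx⟩ => ?_, ?_⟩
  · by_contra! hcon
    obtain ⟨⟨u, hu, huΔ⟩, hnot, hvΔ⟩ := hcon
    obtain ⟨b, ⟨hbΔ, hb_star⟩, hb⟩ := Set.not_subset.mp hnot
    have hfix {w : V} (hw : w ∈ Δ) : starDetector Γ v (x * g (raagGen Γ w) * x⁻¹) 2 = 2 :=
      specialSubgroup_le_comap_starDetector hvΔ
        (hx.le (Subgroup.mem_map_of_mem _ (raagGen_mem_specialSubgroup hw)))
    exact hg.starDetector_conj_apply_two_ne hu (hK hu) hb_star hb x (hfix hbΔ) (hfix huΔ)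
  · rintro (h | h | h)
    · exact (hg.actsTriviallyOn_of_inter_eq_empty h).preservesSubgroup
    · exact (hg.actsTriviallyOn_of_diff_subset h).preservesSubgroup
    · exact hg.preservesSubgroup_of_mem (fun hvK => hK hvK (Set.mem_insert v _)) h

end PartialConj

theorem partialConj_preserves_special_iff_general {V : Type*} (Γ : SimpleGraph V)
    (Δ : Set V) (v : V) (K : Set V) (hK : IsUnionOfComponents Γ v K)
    (g : MulAut (RAAG Γ)) (hg : IsPartialConj Γ g v K) :
    (PreservesSubgroup Γ g (specialSubgroup Γ Δ) ↔
      K ∩ Δ = ∅ ∨ Δ \ graphStar Γ v ⊆ K ∨ v ∈ Δ) ∧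
    (ActsTriviallyOn Γ g (specialSubgroup Γ Δ) ↔
      K ∩ Δ = ∅ ∨ Δ \ graphStar Γ v ⊆ K) :=
  ⟨hg.preservesSubgroup_specialSubgroup_iff hK.1, hg.actsTriviallyOn_specialSubgroup_iff hK.1⟩

theorem partialConj_preserves_special_iff {V : Type*} [Fintype V] (Γ : SimpleGraph V)
    (Δ : Set V) (v : V) (K : Set V) (hK : IsUnionOfComponents Γ v K)
    (g : MulAut (RAAG Γ)) (hg : IsPartialConj Γ g v K) :
    (PreservesSubgroup Γ g (specialSubgroup Γ Δ) ↔
      K ∩ Δ = ∅ ∨ Δ \ graphStar Γ v ⊆ K ∨ v ∈ Δ) ∧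
    (ActsTriviallyOn Γ g (specialSubgroup Γ Δ) ↔
      K ∩ Δ = ∅ ∨ Δ \ graphStar Γ v ⊆ K) :=
  partialConj_preserves_special_iff_general Γ Δ v K hK g hg
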